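/- Under Assumption A(p,𝔞) with p ≥ 6 and 𝔞 > 13/6, there exists a constant C > 0 such that for all k ≥ 2b, ‖B_{kb} − B'_{kb}‖_p² ≤ C k^{−2𝔞+1}, where B_{kb} = Σ_{h=1}^b X_{k−h} (with X_{k−h} := 0 when k−h ≤ 0) and B'_{kb} = Σ_{h=1}^b X_{k−h}^{(k−h,')}. -/

import Mathlib

open MeasureTheory ProbabilityTheory Filter

section Setup

variable {Ω : Type*} [MeasurableSpace Ω] {S : Type*} [MeasurableSpace S]
variable (μ : Measure Ω) (ε ε' : ℤ → Ω → S) (g : (ℕ → S) → ℝ)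

/-- The stationary process `X k = g (ε k, ε (k-1), ε (k-2), …)`. -/
noncomputable def X (k : ℤ) (ω : Ω) : ℝ := g fun i => ε (k - i) ω

/-- The coupled version `X_k^{(l,')}`: the coordinate `ε (k - l)` is replaced by `ε' (k - l)`. -/
noncomputable def Xc (k l : ℤ) (ω : Ω) : ℝ :=
  g fun i => if (i : ℤ) = l then ε' (k - l) ω else ε (k - i) ω

/-- The `L^p`-norm `(E |Z|^p)^(1/p)`. -/
noncomputable def nrm (p : ℝ) (Z : Ω → ℝ) : ℝ := (∫ ω, |Z ω| ^ p ∂μ) ^ (1 / p)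

/-- The dependence coefficient `θ_{l,p} = ‖X_l - X_l^{(l,')}‖_p`. -/
noncomputable def theta (p : ℝ) (l : ℕ) : ℝ :=
  nrm μ p (fun ω => X ε g l ω - Xc ε ε' g l l ω)

/-- The long-run variance `σ² = Σ_{k ∈ ℤ} E X_0 X_k`. -/
noncomputable def sigma2 : ℝ := ∑' k : ℤ, ∫ ω, X ε g 0 ω * X ε g k ω ∂μ

/-- The partial sum `S_n = X_1 + … + X_n`. -/
noncomputable def Sn (n : ℕ) (ω : Ω) : ℝ := ∑ k ∈ Finset.Icc 1 n, X ε g k ω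

/-- The basic setup: `(ε_k)` is an i.i.d. sequence, `(ε'_k)` an independent copy, and the
stationary process `X_k = g(ε_k, ε_{k-1}, …)` is centered. -/
structure IsIIDSetup : Prop where
  isProb : IsProbabilityMeasure μ
  meas_g : Measurable g
  meas_eps : ∀ k, Measurable (ε k)
  meas_eps' : ∀ k, Measurable (ε' k)
  ident : ∀ k, μ.map (ε k) = μ.map (ε 0)
  ident' : ∀ k, μ.map (ε' k) = μ.map (ε 0)
  indep : iIndepFun (Sum.elim ε ε') μ
  mean_zero : ∫ ω, X ε g 0 ω ∂μ = 0

/-- Assumption A(p, 𝔞): `Θ_{𝔞,p} < ∞` (membership in `L^p` and summability of `l^𝔞 θ_{l,p}`),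
positive long-run variance, and a bandwidth `b = b(n) → ∞` with `b ≤ (n / log³ n)^(1/4)`. -/
structure AssumptionA (p a : ℝ) (b : ℕ → ℕ) : Prop where
  setup : IsIIDSetup μ ε ε' g
  memLp : MemLp (X ε g 0) (ENNReal.ofReal p) μ
  theta_summable : Summable fun l : ℕ => (l : ℝ) ^ a * theta μ ε ε' g p l
  sigma2_pos : 0 < sigma2 μ ε g
  b_tendsto : Tendsto b atTop atTop
  b_le : ∀ n : ℕ, 2 ≤ n → (b n : ℝ) ≤ ((n : ℝ) / Real.log n ^ 3) ^ ((1 : ℝ) / 4)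

/-- The sample mean `X̄_n`. -/
noncomputable def Xbar (n : ℕ) (ω : Ω) : ℝ := (∑ k ∈ Finset.Icc 1 n, X ε g k ω) / (n : ℝ)

/-- The empirical autocovariance `γ̂_X(h)`, `0 ≤ h`. -/
noncomputable def hatGamma (n h : ℕ) (ω : Ω) : ℝ :=
  (∑ k ∈ Finset.Icc (h + 1) n,
    (X ε g k ω - Xbar ε g n ω) * (X ε g ((k : ℤ) - (h : ℤ)) ω - Xbar ε g n ω)) / (n : ℝ)

/-- The long-run variance estimator `σ̂²_{nb} = Σ_{|h| ≤ b} γ̂_X(h)`. -/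
noncomputable def hatSigma2 (n b : ℕ) (ω : Ω) : ℝ :=
  hatGamma ε g n 0 ω + 2 * ∑ h ∈ Finset.Icc 1 b, hatGamma ε g n h ω

/-- `σ_b² = Σ_{|h| ≤ b} E X_h X_0`. -/
noncomputable def sigmaB2 (b : ℕ) : ℝ :=
  ∑ h ∈ Finset.Icc (-(b : ℤ)) (b : ℤ), ∫ ω, X ε g h ω * X ε g 0 ω ∂μ

/-- The standard normal distribution function `Φ`. -/
noncomputable def Phi (x : ℝ) : ℝ := ((gaussianReal 0 1) (Set.Iic x)).toReal

/-- `B_{kb} = Σ_{h=1}^b X_{k-h}`, with the convention `X_{k-h} = 0` for `k - h ≤ 0`. -/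
noncomputable def Bkb (b : ℕ) (k : ℤ) (ω : Ω) : ℝ :=
  ∑ h ∈ Finset.Icc 1 b, if k - (h : ℤ) ≤ 0 then 0 else X ε g (k - (h : ℤ)) ω

/-- `B'_{kb} = Σ_{h=1}^b X_{k-h}^{(k-h,')}`, with the same convention. -/
noncomputable def Bkbc (b : ℕ) (k : ℤ) (ω : Ω) : ℝ :=
  ∑ h ∈ Finset.Icc 1 b, if k - (h : ℤ) ≤ 0 then 0
    else Xc ε ε' g (k - (h : ℤ)) (k - (h : ℤ)) ω

/-- `σ̃²_{nb} = n⁻¹ Σ_{k=1}^n (X_k² + 2 Σ_{h=1}^b X_k X_{k-h})`, convention `X_{k-h} = 0` for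
`k - h ≤ 0`. -/
noncomputable def sigmaTilde2 (n b : ℕ) (ω : Ω) : ℝ :=
  (∑ k ∈ Finset.Icc 1 n, (X ε g k ω ^ 2 +
    2 * ∑ h ∈ Finset.Icc 1 b,
      (if (k : ℤ) - (h : ℤ) ≤ 0 then 0 else X ε g k ω * X ε g ((k : ℤ) - (h : ℤ)) ω))) / (n : ℝ)

/-- `σ²_{nb} = E σ̃²_{nb}`. -/
noncomputable def sigmaNb2 (n b : ℕ) : ℝ := ∫ ω, sigmaTilde2 ε g n b ω ∂μ

/-- `Y_k(x) = X_k (1 - x X_k/(2 √n σ_{nb}) - x B_{kb}/(√n σ_{nb}))`. -/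
noncomputable def Yk (n b : ℕ) (x : ℝ) (k : ℤ) (ω : Ω) : ℝ :=
  X ε g k ω * (1 - x * X ε g k ω / (2 * Real.sqrt (n : ℝ) * Real.sqrt (sigmaNb2 μ ε g n b))
    - x * Bkb ε g b k ω / (Real.sqrt (n : ℝ) * Real.sqrt (sigmaNb2 μ ε g n b)))

/-- `Y'_k(x)`: every underlying `X_j` is replaced by `X_j^{(j,')}`. -/
noncomputable def Ykc (n b : ℕ) (x : ℝ) (k : ℤ) (ω : Ω) : ℝ :=
  Xc ε ε' g k k ω *
    (1 - x * Xc ε ε' g k k ω / (2 * Real.sqrt (n : ℝ) * Real.sqrt (sigmaNb2 μ ε g n b))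
      - x * Bkbc ε ε' g b k ω / (Real.sqrt (n : ℝ) * Real.sqrt (sigmaNb2 μ ε g n b)))

/-- `W_k = 2 b^{-1/2} X_k B_{kb}`. -/
noncomputable def Wk (b : ℕ) (k : ℤ) (ω : Ω) : ℝ :=
  2 * (b : ℝ) ^ (-(1 : ℝ) / 2) * X ε g k ω * Bkb ε g b k ω

/-- The block variable `V_{lb} = Σ_{k ∈ ℐ_{lb}} (b^{-1/2} X_k² + W_k)`,
`ℐ_{lb} = {b(l-1)+1, …, bl}`. -/
noncomputable def Vlb (b l : ℕ) (ω : Ω) : ℝ :=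
  ∑ k ∈ Finset.Icc (b * (l - 1) + 1) (b * l),
    ((b : ℝ) ^ (-(1 : ℝ) / 2) * X ε g k ω ^ 2 + Wk ε g b k ω)

/-- `X_k` with the innovation block `ζ_0 = (ε_0, …, ε_{-b+1})` replaced by an independent copy. -/
noncomputable def Xsub (b : ℕ) (k : ℤ) (ω : Ω) : ℝ :=
  g fun i => if 1 - (b : ℤ) ≤ k - (i : ℤ) ∧ k - (i : ℤ) ≤ 0
    then ε' (k - (i : ℤ)) ω else ε (k - (i : ℤ)) ω

/-- `B_{kb}` with the innovation block `ζ_0` replaced by an independent copy. -/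
noncomputable def BkbSub (b : ℕ) (k : ℤ) (ω : Ω) : ℝ :=
  ∑ h ∈ Finset.Icc 1 b, if k - (h : ℤ) ≤ 0 then 0 else Xsub ε ε' g b (k - (h : ℤ)) ω

/-- `W_k` with the innovation block `ζ_0` replaced by an independent copy. -/
noncomputable def WkSub (b : ℕ) (k : ℤ) (ω : Ω) : ℝ :=
  2 * (b : ℝ) ^ (-(1 : ℝ) / 2) * Xsub ε ε' g b k ω * BkbSub ε ε' g b k ω

/-- `V'_{lb}`: the block variable with the innovation block `ζ_0` replaced by an
independent copy. -/
noncomputable def VlbSub (b l : ℕ) (ω : Ω) : ℝ :=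
  ∑ k ∈ Finset.Icc (b * (l - 1) + 1) (b * l),
    ((b : ℝ) ^ (-(1 : ℝ) / 2) * Xsub ε ε' g b k ω ^ 2 + WkSub ε ε' g b k ω)

/-- `B_{kb}` without truncation (the full two-sided stationary sequence is used). -/
noncomputable def BkbFull (b : ℕ) (k : ℤ) (ω : Ω) : ℝ :=
  ∑ h ∈ Finset.Icc 1 b, X ε g (k - (h : ℤ)) ω

/-- `σ̃²_{nb}` without truncation. -/
noncomputable def sigmaTilde2Full (n b : ℕ) (ω : Ω) : ℝ :=
  (∑ k ∈ Finset.Icc 1 n, (X ε g k ω ^ 2 +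
    2 * ∑ h ∈ Finset.Icc 1 b, X ε g k ω * X ε g ((k : ℤ) - (h : ℤ)) ω)) / (n : ℝ)

/-- `σ²_{nb} = E σ̃²_{nb}` without truncation. -/
noncomputable def sigmaNb2Full (n b : ℕ) : ℝ := ∫ ω, sigmaTilde2Full ε g n b ω ∂μ

/-- `Y_k(x)` without truncation. -/
noncomputable def YkFull (n b : ℕ) (x : ℝ) (k : ℤ) (ω : Ω) : ℝ :=
  X ε g k ω *
    (1 - x * X ε g k ω / (2 * Real.sqrt (n : ℝ) * Real.sqrt (sigmaNb2Full μ ε g n b))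
      - x * BkbFull ε g b k ω / (Real.sqrt (n : ℝ) * Real.sqrt (sigmaNb2Full μ ε g n b)))

/-- The star coupling `X_k^* = X_k^{(k,*)}`: all coordinates `ε_j`, `j ≤ 0`, are replaced by the
independent copy. -/
noncomputable def Xstar (k : ℤ) (ω : Ω) : ℝ :=
  g fun i => if k - (i : ℤ) ≤ 0 then ε' (k - (i : ℤ)) ω else ε (k - (i : ℤ)) ω

/-- `λ_{m,p} = sup_{l ≥ m} ‖X_l - X_l^{(l,*)}‖_p`. -/
noncomputable def lam (p : ℝ) (m : ℕ) : ℝ :=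
  ⨆ l : {l : ℕ // m ≤ l}, nrm μ p (fun ω => X ε g (l.1 : ℤ) ω - Xstar ε ε' g (l.1 : ℤ) ω)

/-- The σ-algebra `ℰ_j = σ(ε_i, i ≤ j)`. -/
noncomputable def Ej (j : ℤ) : MeasurableSpace Ω :=
  ⨆ i : {i : ℤ // i ≤ j}, MeasurableSpace.comap (ε i.1) inferInstance


section AuxStatement10

variable {Ω : Type*} [MeasurableSpace Ω] {S : Type*} [MeasurableSpace S]

namespace Statement10Aux

variable {μ : Measure Ω} {ε ε' : ℤ → Ω → S} {g : (ℕ → S) → ℝ}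

lemma meas_elim (hS : IsIIDSetup μ ε ε' g) (j : ℤ ⊕ ℤ) :
    Measurable (Sum.elim ε ε' j) := by
  cases j with
  | inl k => exact hS.meas_eps k
  | inr k => exact hS.meas_eps' k

lemma meas_proc (hS : IsIIDSetup μ ε ε' g) (τ : ℕ → ℤ ⊕ ℤ) :
    Measurable (fun ω (i : ℕ) => Sum.elim ε ε' (τ i) ω) :=
  measurable_pi_lambda _ fun i => meas_elim hS (τ i)

lemma single_law (hS : IsIIDSetup μ ε ε' g) (j : ℤ ⊕ ℤ) {A : Set S} (hA : MeasurableSet A) :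
    μ (Sum.elim ε ε' j ⁻¹' A) = (μ.map (ε 0)) A := by
  cases j with
  | inl k =>
    rw [← hS.ident k, Measure.map_apply (hS.meas_eps k) hA]
    rfl
  | inr k =>
    rw [← hS.ident' k, Measure.map_apply (hS.meas_eps' k) hA]
    rfl

lemma inter_preimage (hS : IsIIDSetup μ ε ε' g) {τ : ℕ → ℤ ⊕ ℤ}
    (hτ : Function.Injective τ) (s : Finset ℕ) (A : ℕ → Set S)
    (hA : ∀ i, MeasurableSet (A i)) :
    μ (⋂ i ∈ s, Sum.elim ε ε' (τ i) ⁻¹' A i)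
      = ∏ i ∈ s, μ (Sum.elim ε ε' (τ i) ⁻¹' A i) := by
  classical
  set B : ℤ ⊕ ℤ → Set S := fun j => ⋂ i ∈ s.filter fun i' => τ i' = j, A i with hBdef
  have hBm : ∀ j, MeasurableSet (B j) := fun j =>
    Finset.measurableSet_biInter _ fun i _ => hA i
  have hBτ : ∀ i ∈ s, B (τ i) = A i := by
    intro i hi
    have hf : s.filter (fun i' => τ i' = τ i) = {i} := by
      ext i'
      simp only [Finset.mem_filter, Finset.mem_singleton]
      constructor
      · rintro ⟨-, h2⟩
        exact hτ h2
      · rintro rfl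
        exact ⟨hi, rfl⟩
    show (⋂ i' ∈ s.filter fun i'' => τ i'' = τ i, A i') = A i
    rw [hf]
    simp
  have hkey : (⋂ j ∈ s.image τ, Sum.elim ε ε' j ⁻¹' B j)
      = ⋂ i ∈ s, Sum.elim ε ε' (τ i) ⁻¹' A i := by
    rw [Finset.set_biInter_finset_image]
    exact Set.iInter₂_congr fun i hi => by rw [hBτ i hi]
  rw [← hkey, hS.indep.measure_inter_preimage_eq_mul (s.image τ) (fun j _ => hBm j),
    Finset.prod_image (fun i _ j _ h => hτ h)]
  exact Finset.prod_congr rfl fun i hi => by rw [hBτ i hi]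

lemma findim_law (hS : IsIIDSetup μ ε ε' g) {τ : ℕ → ℤ ⊕ ℤ}
    (hτ : Function.Injective τ) (s : Finset ℕ) :
    μ.map (fun ω (i : s) => Sum.elim ε ε' (τ i.1) ω)
      = Measure.pi (fun _ : s => μ.map (ε 0)) := by
  classical
  haveI := hS.isProb
  haveI : IsProbabilityMeasure (μ.map (ε 0)) :=
    Measure.isProbabilityMeasure_map (hS.meas_eps 0).aemeasurable
  have hmeas : Measurable (fun ω (i : s) => Sum.elim ε ε' (τ i.1) ω) :=
    measurable_pi_lambda _ fun i => meas_elim hS (τ i.1)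
  refine (Measure.pi_eq fun A hA => ?_).symm
  set A' : ℕ → Set S := fun i => if h : i ∈ s then A ⟨i, h⟩ else Set.univ with hA'def
  have hA'm : ∀ i, MeasurableSet (A' i) := by
    intro i
    rw [hA'def]
    dsimp only
    split
    · exact hA _
    · exact MeasurableSet.univ
  have hpre : (fun ω (i : s) => Sum.elim ε ε' (τ i.1) ω) ⁻¹' Set.pi Set.univ A
      = ⋂ i ∈ s, Sum.elim ε ε' (τ i) ⁻¹' A' i := by
    ext ω
    simp only [Set.mem_preimage, Set.mem_pi, Set.mem_univ, forall_true_left, Set.mem_iInter]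
    constructor
    · intro h i hi
      have := h ⟨i, hi⟩
      simpa [hA'def, hi] using this
    · intro h i
      have := h i.1 i.2
      simpa [hA'def, i.2] using this
  rw [Measure.map_apply hmeas (MeasurableSet.univ_pi hA), hpre,
    inter_preimage hS hτ s A' hA'm, Finset.univ_eq_attach,
    ← Finset.prod_attach s fun i => μ (Sum.elim ε ε' (τ i) ⁻¹' A' i)]
  refine Finset.prod_congr rfl fun i _ => ?_
  rw [single_law hS (τ i.1) (hA'm i.1)]
  congr 1
  simp [hA'def, i.2]

lemma law_eq (hS : IsIIDSetup μ ε ε' g) {τ τ' : ℕ → ℤ ⊕ ℤ}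
    (hτ : Function.Injective τ) (hτ' : Function.Injective τ') :
    μ.map (fun ω (i : ℕ) => Sum.elim ε ε' (τ i) ω)
      = μ.map (fun ω (i : ℕ) => Sum.elim ε ε' (τ' i) ω) := by
  haveI := hS.isProb
  have hm : Measurable (fun ω (i : ℕ) => Sum.elim ε ε' (τ i) ω) := meas_proc hS τ
  have hm' : Measurable (fun ω (i : ℕ) => Sum.elim ε ε' (τ' i) ω) := meas_proc hS τ'
  haveI : IsProbabilityMeasure (μ.map (fun ω (i : ℕ) => Sum.elim ε ε' (τ i) ω)) :=
    Measure.isProbabilityMeasure_map hm.aemeasurable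
  refine ext_of_generate_finite (measurableCylinders fun _ : ℕ => S)
    generateFrom_measurableCylinders.symm isPiSystem_measurableCylinders
    (fun t ht => ?_) ?_
  · obtain ⟨s, T, hT, rfl⟩ := (mem_measurableCylinders t).mp ht
    rw [Measure.map_apply hm (hT.cylinder), Measure.map_apply hm' (hT.cylinder)]
    have e1 : (fun ω (i : ℕ) => Sum.elim ε ε' (τ i) ω) ⁻¹' cylinder s T
        = (fun ω (i : s) => Sum.elim ε ε' (τ i.1) ω) ⁻¹' T := rfl
    have e2 : (fun ω (i : ℕ) => Sum.elim ε ε' (τ' i) ω) ⁻¹' cylinder s T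
        = (fun ω (i : s) => Sum.elim ε ε' (τ' i.1) ω) ⁻¹' T := rfl
    rw [e1, e2,
      ← Measure.map_apply (measurable_pi_lambda _ fun i => meas_elim hS (τ i.1)) hT,
      ← Measure.map_apply (measurable_pi_lambda _ fun i => meas_elim hS (τ' i.1)) hT,
      findim_law hS hτ s, findim_law hS hτ' s]
  · rw [Measure.map_apply hm MeasurableSet.univ, Measure.map_apply hm' MeasurableSet.univ,
      Set.preimage_univ, Set.preimage_univ]

lemma memLp_proc (hS : IsIIDSetup μ ε ε' g) {q : ENNReal}
    (hX : MemLp (X ε g 0) q μ) {τ : ℕ → ℤ ⊕ ℤ} (hτ : Function.Injective τ) :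
    MemLp (fun ω => g fun i => Sum.elim ε ε' (τ i) ω) q μ := by
  have hτ0 : Function.Injective (fun i : ℕ => (Sum.inl ((0 : ℤ) - (i : ℤ)) : ℤ ⊕ ℤ)) := by
    intro i j h
    simp only [Sum.inl.injEq] at h
    omega
  have hg : ∀ ν : Measure (ℕ → S), AEStronglyMeasurable g ν := fun ν =>
    hS.meas_g.aestronglyMeasurable
  have h1 : MemLp (g ∘ fun ω (i : ℕ) => Sum.elim ε ε' (Sum.inl ((0 : ℤ) - (i : ℤ))) ω) q μ := hX
  rw [← memLp_map_measure_iff (hg _) (meas_proc hS _).aemeasurable] at h1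
  rw [law_eq hS hτ0 hτ] at h1
  rw [memLp_map_measure_iff (hg _) (meas_proc hS _).aemeasurable] at h1
  exact h1

lemma memLp_X (hS : IsIIDSetup μ ε ε' g) {q : ENNReal}
    (hX : MemLp (X ε g 0) q μ) (k : ℤ) : MemLp (X ε g k) q μ := by
  have hτ : Function.Injective (fun i : ℕ => (Sum.inl (k - (i : ℤ)) : ℤ ⊕ ℤ)) := by
    intro i j h
    simp only [Sum.inl.injEq] at h
    omega
  exact memLp_proc hS hX hτ

lemma memLp_Xc (hS : IsIIDSetup μ ε ε' g) {q : ENNReal}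
    (hX : MemLp (X ε g 0) q μ) (l : ℤ) : MemLp (fun ω => Xc ε ε' g l l ω) q μ := by
  set τ : ℕ → ℤ ⊕ ℤ := fun i => if (i : ℤ) = l then Sum.inr 0 else Sum.inl (l - (i : ℤ))
    with hτdef
  have hτ : Function.Injective τ := by
    intro i j h
    rw [hτdef] at h
    by_cases hi : (i : ℤ) = l <;> by_cases hj : (j : ℤ) = l <;>
      simp only [hi, hj, if_pos, if_neg, if_true, if_false] at h <;>
      first
        | omega
        | (simp only [Sum.inl.injEq] at h; omega)
        | (exact absurd h (by simp))
  have heq : (fun ω => Xc ε ε' g l l ω) = fun ω => g fun i => Sum.elim ε ε' (τ i) ω := by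
    funext ω
    simp only [Xc, hτdef]
    congr 1
    funext i
    split_ifs with h
    · rw [sub_self]
      rfl
    · rfl
  rw [heq]
  exact memLp_proc hS hX hτ

lemma nrm_nonneg (μ : Measure Ω) (p : ℝ) (Z : Ω → ℝ) : 0 ≤ nrm μ p Z :=
  Real.rpow_nonneg (integral_nonneg fun ω => Real.rpow_nonneg (abs_nonneg _) p) _

lemma theta_nonneg (μ : Measure Ω) (ε ε' : ℤ → Ω → S) (g : (ℕ → S) → ℝ) (p : ℝ) (l : ℕ) :
    0 ≤ theta μ ε ε' g p l :=
  nrm_nonneg μ p _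

lemma nrm_eq_toReal {p : ℝ} (hp : 0 < p) {Z : Ω → ℝ}
    (hZ : MemLp Z (ENNReal.ofReal p) μ) :
    nrm μ p Z = (eLpNorm Z (ENNReal.ofReal p) μ).toReal := by
  rw [hZ.eLpNorm_eq_integral_rpow_norm (ENNReal.ofReal_pos.mpr hp).ne' ENNReal.ofReal_ne_top,
    ENNReal.toReal_ofReal
      (Real.rpow_nonneg (integral_nonneg fun ω => Real.rpow_nonneg (norm_nonneg _) _) _)]
  simp only [nrm, Real.norm_eq_abs, ENNReal.toReal_ofReal hp.le, one_div]

end Statement10Aux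

end AuxStatement10

/-- Lemma `lem:bound:difference:I`: under Assumption A(p,𝔞), for `k ≥ 2b`,
`‖B_{kb} - B'_{kb}‖_p² ≤ C k^{-2𝔞+1}`. -/
theorem statement10 (p a : ℝ) (b : ℕ → ℕ) (hp : 6 ≤ p) (ha : 13 / 6 < a)
    (hA : AssumptionA μ ε ε' g p a b) :
    ∃ C > 0, ∀ n : ℕ, ∀ k : ℤ, 2 * (b n : ℤ) ≤ k →
      (nrm μ p (fun ω => Bkb ε g (b n) k ω - Bkbc ε ε' g (b n) k ω)) ^ 2 ≤
        C * (k : ℝ) ^ (-2 * a + 1) := by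
  classical
  open Statement10Aux in
  obtain hS := hA.setup
  haveI := hS.isProb
  have hp0 : (0 : ℝ) < p := lt_of_lt_of_le (by norm_num) hp
  have ha0 : (0 : ℝ) < a := lt_trans (by norm_num) ha
  set q : ENNReal := ENNReal.ofReal p with hqdef
  have hq1 : (1 : ENNReal) ≤ q := by
    rw [hqdef, ← ENNReal.ofReal_one]
    exact ENNReal.ofReal_le_ofReal (by linarith)
  set Θ : ℝ := ∑' l : ℕ, (l : ℝ) ^ a * theta μ ε ε' g p l with hΘdef
  have hΘ0 : 0 ≤ Θ :=
    tsum_nonneg fun l =>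
      mul_nonneg (Real.rpow_nonneg (Nat.cast_nonneg l) a) (theta_nonneg μ ε ε' g p l)
  refine ⟨(2 : ℝ) ^ (2 * a) * Θ ^ 2 + 1, by positivity, ?_⟩
  intro n k hk
  have hk0 : (0 : ℤ) ≤ k := le_trans (by positivity) hk
  have hrpow0 : (0 : ℝ) ≤ (k : ℝ) ^ (-2 * a + 1) :=
    Real.rpow_nonneg (by exact_mod_cast hk0) _
  have hC0 : (0 : ℝ) ≤ (2 : ℝ) ^ (2 * a) * Θ ^ 2 + 1 := by positivity
  by_cases hb : b n = 0
  · have hzero : (fun ω => Bkb ε g (b n) k ω - Bkbc ε ε' g (b n) k ω) = fun _ => (0 : ℝ) := by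
      funext ω
      simp [Bkb, Bkbc, hb]
    rw [hzero]
    have : nrm μ p (fun _ : Ω => (0 : ℝ)) = 0 := by
      simp [nrm, Real.zero_rpow hp0.ne', Real.zero_rpow (inv_ne_zero hp0.ne'),
        Real.zero_rpow (one_div_ne_zero hp0.ne')]
    rw [this]
    have : (0 : ℝ) ^ 2 = 0 := by norm_num
    rw [this]
    positivity
  · -- main case
    have hb1 : 1 ≤ b n := Nat.one_le_iff_ne_zero.mpr hb
    have hk2 : (2 : ℤ) ≤ k := le_trans (by exact_mod_cast by omega : (2 : ℤ) ≤ 2 * (b n : ℤ)) hk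
    have hk1R : (1 : ℝ) ≤ (k : ℝ) := by exact_mod_cast (by omega : (1 : ℤ) ≤ k)
    have hkposR : (0 : ℝ) < (k : ℝ) := by linarith
    set s : Finset ℕ := Finset.Icc 1 (b n) with hsdef
    set F : ℕ → Ω → ℝ :=
      fun h ω => X ε g (k - (h : ℤ)) ω - Xc ε ε' g (k - (h : ℤ)) (k - (h : ℤ)) ω with hFdef
    have hmemF : ∀ h ∈ s, MemLp (F h) q μ := fun h _ =>
      (memLp_X hS hA.memLp (k - (h : ℤ))).sub (memLp_Xc hS hA.memLp (k - (h : ℤ)))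
    have hnotle : ∀ h ∈ s, ¬ (k - (h : ℤ) ≤ 0) := by
      intro h hh
      rw [hsdef, Finset.mem_Icc] at hh
      omega
    have hsum_eq : (fun ω => Bkb ε g (b n) k ω - Bkbc ε ε' g (b n) k ω)
        = fun ω => ∑ h ∈ s, F h ω := by
      funext ω
      simp only [Bkb, Bkbc, ← Finset.sum_sub_distrib, ← hsdef]
      refine Finset.sum_congr rfl fun h hh => ?_
      rw [if_neg (hnotle h hh), if_neg (hnotle h hh)]
    have hmemsum : MemLp (fun ω => ∑ h ∈ s, F h ω) q μ := memLp_finsetSum s hmemF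
    -- Minkowski
    have hnrm_le : nrm μ p (fun ω => Bkb ε g (b n) k ω - Bkbc ε ε' g (b n) k ω)
        ≤ ∑ h ∈ s, (eLpNorm (F h) q μ).toReal := by
      rw [hsum_eq, nrm_eq_toReal hp0 hmemsum]
      have hfn : (fun ω => ∑ h ∈ s, F h ω) = ∑ h ∈ s, F h := by
        funext ω
        simp
      have h1 : eLpNorm (fun ω => ∑ h ∈ s, F h ω) q μ ≤ ∑ h ∈ s, eLpNorm (F h) q μ := by
        rw [hfn]
        exact eLpNorm_sum_le (fun h hh => (hmemF h hh).aestronglyMeasurable) hq1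
      have hne : (∑ h ∈ s, eLpNorm (F h) q μ) ≠ ⊤ :=
        (ENNReal.sum_lt_top.mpr fun h hh => (hmemF h hh).eLpNorm_lt_top).ne
      calc (eLpNorm (fun ω => ∑ h ∈ s, F h ω) q μ).toReal
          ≤ (∑ h ∈ s, eLpNorm (F h) q μ).toReal := ENNReal.toReal_mono hne h1
        _ = ∑ h ∈ s, (eLpNorm (F h) q μ).toReal :=
            ENNReal.toReal_sum fun h hh => (hmemF h hh).eLpNorm_ne_top
    -- identify with theta
    have htheta : ∀ h ∈ s, (eLpNorm (F h) q μ).toReal = theta μ ε ε' g p (k - (h : ℤ)).toNat := by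
      intro h hh
      have hpos : (0 : ℤ) ≤ k - (h : ℤ) := by
        have := hnotle h hh
        omega
      have hc : (((k - (h : ℤ)).toNat : ℤ)) = k - (h : ℤ) := Int.toNat_of_nonneg hpos
      rw [← nrm_eq_toReal hp0 (hmemF h hh)]
      show nrm μ p (F h) = nrm μ p
        (fun ω => X ε g ((k - (h : ℤ)).toNat : ℤ) ω -
          Xc ε ε' g ((k - (h : ℤ)).toNat : ℤ) ((k - (h : ℤ)).toNat : ℤ) ω)
      rw [hc]
    -- bound each theta
    have hineq1 : ∀ h ∈ s, theta μ ε ε' g p (k - (h : ℤ)).toNat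
        ≤ (2 : ℝ) ^ a / (k : ℝ) ^ a *
          ((((k - (h : ℤ)).toNat : ℕ) : ℝ) ^ a * theta μ ε ε' g p (k - (h : ℤ)).toNat) := by
      intro h hh
      set m : ℕ := (k - (h : ℤ)).toNat with hmdef
      have hhmem := hh
      rw [hsdef, Finset.mem_Icc] at hhmem
      have h2m : (k : ℝ) ≤ 2 * (m : ℝ) := by
        have : k ≤ 2 * ((m : ℤ)) := by omega
        exact_mod_cast this
      have hka : (k : ℝ) ^ a ≤ (2 * (m : ℝ)) ^ a :=
        Real.rpow_le_rpow hkposR.le h2m ha0.le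
      have hmul : (2 * (m : ℝ)) ^ a = (2 : ℝ) ^ a * (m : ℝ) ^ a :=
        Real.mul_rpow (by norm_num) (Nat.cast_nonneg m)
      have hkapos : (0 : ℝ) < (k : ℝ) ^ a := Real.rpow_pos_of_pos hkposR a
      have hone : (1 : ℝ) ≤ (2 : ℝ) ^ a * (m : ℝ) ^ a / (k : ℝ) ^ a := by
        rw [le_div_iff₀ hkapos, one_mul, ← hmul]
        exact hka
      have hθ0 : 0 ≤ theta μ ε ε' g p m := theta_nonneg μ ε ε' g p m
      calc theta μ ε ε' g p m = 1 * theta μ ε ε' g p m := (one_mul _).symm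
        _ ≤ (2 : ℝ) ^ a * (m : ℝ) ^ a / (k : ℝ) ^ a * theta μ ε ε' g p m :=
            mul_le_mul_of_nonneg_right hone hθ0
        _ = (2 : ℝ) ^ a / (k : ℝ) ^ a * ((m : ℝ) ^ a * theta μ ε ε' g p m) := by ring
    -- sum over distinct indices
    have hsum2 : ∑ h ∈ s, ((((k - (h : ℤ)).toNat : ℕ) : ℝ) ^ a *
        theta μ ε ε' g p (k - (h : ℤ)).toNat) ≤ Θ := by
      have himg : ∑ h ∈ s, ((((k - (h : ℤ)).toNat : ℕ) : ℝ) ^ a *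
          theta μ ε ε' g p (k - (h : ℤ)).toNat)
          = ∑ m ∈ s.image (fun h : ℕ => (k - (h : ℤ)).toNat),
            ((m : ℝ) ^ a * theta μ ε ε' g p m) := by
        rw [Finset.sum_image]
        intro x hx y hy hxy
        simp only [hsdef, Finset.coe_Icc, Set.mem_Icc] at hx hy hxy
        omega
      rw [himg, hΘdef]
      exact Summable.sum_le_tsum _
        (fun l _ => mul_nonneg (Real.rpow_nonneg (Nat.cast_nonneg l) a)
          (theta_nonneg μ ε ε' g p l))
        hA.theta_summable
    have hD0 : (0 : ℝ) ≤ (2 : ℝ) ^ a / (k : ℝ) ^ a := by positivity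
    have hchain : nrm μ p (fun ω => Bkb ε g (b n) k ω - Bkbc ε ε' g (b n) k ω)
        ≤ (2 : ℝ) ^ a / (k : ℝ) ^ a * Θ := by
      calc nrm μ p (fun ω => Bkb ε g (b n) k ω - Bkbc ε ε' g (b n) k ω)
          ≤ ∑ h ∈ s, (eLpNorm (F h) q μ).toReal := hnrm_le
        _ = ∑ h ∈ s, theta μ ε ε' g p (k - (h : ℤ)).toNat := Finset.sum_congr rfl htheta
        _ ≤ ∑ h ∈ s, (2 : ℝ) ^ a / (k : ℝ) ^ a *
              ((((k - (h : ℤ)).toNat : ℕ) : ℝ) ^ a * theta μ ε ε' g p (k - (h : ℤ)).toNat) :=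
            Finset.sum_le_sum hineq1
        _ = (2 : ℝ) ^ a / (k : ℝ) ^ a * ∑ h ∈ s, ((((k - (h : ℤ)).toNat : ℕ) : ℝ) ^ a *
              theta μ ε ε' g p (k - (h : ℤ)).toNat) := by rw [Finset.mul_sum]
        _ ≤ (2 : ℝ) ^ a / (k : ℝ) ^ a * Θ := mul_le_mul_of_nonneg_left hsum2 hD0
    have hsq : (nrm μ p (fun ω => Bkb ε g (b n) k ω - Bkbc ε ε' g (b n) k ω)) ^ 2
        ≤ ((2 : ℝ) ^ a / (k : ℝ) ^ a * Θ) ^ 2 :=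
      pow_le_pow_left₀ (nrm_nonneg μ p _) hchain 2
    have hsq_eq : ((2 : ℝ) ^ a / (k : ℝ) ^ a * Θ) ^ 2
        = (2 : ℝ) ^ (2 * a) * Θ ^ 2 * (k : ℝ) ^ (-2 * a) := by
      have h2 : ((2 : ℝ) ^ a) ^ 2 = (2 : ℝ) ^ (2 * a) := by
        rw [sq, ← Real.rpow_add (by norm_num : (0 : ℝ) < 2)]
        ring_nf
      have hkk : ((k : ℝ) ^ a) ^ 2 = (k : ℝ) ^ (2 * a) := by
        rw [sq, ← Real.rpow_add hkposR]
        ring_nf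
      have hneg : (k : ℝ) ^ (-2 * a) = ((k : ℝ) ^ (2 * a))⁻¹ := by
        rw [show (-2 : ℝ) * a = -(2 * a) by ring, Real.rpow_neg hkposR.le]
      rw [div_mul_eq_mul_div, div_pow, mul_pow, h2, hkk, hneg, div_eq_mul_inv]
    have hexp : (k : ℝ) ^ (-2 * a) ≤ (k : ℝ) ^ (-2 * a + 1) :=
      Real.rpow_le_rpow_of_exponent_le hk1R (by linarith)
    calc (nrm μ p (fun ω => Bkb ε g (b n) k ω - Bkbc ε ε' g (b n) k ω)) ^ 2
        ≤ (2 : ℝ) ^ (2 * a) * Θ ^ 2 * (k : ℝ) ^ (-2 * a) := by rw [← hsq_eq]; exact hsq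
      _ ≤ (2 : ℝ) ^ (2 * a) * Θ ^ 2 * (k : ℝ) ^ (-2 * a + 1) :=
          mul_le_mul_of_nonneg_left hexp (by positivity)
      _ ≤ ((2 : ℝ) ^ (2 * a) * Θ ^ 2 + 1) * (k : ℝ) ^ (-2 * a + 1) :=
          mul_le_mul_of_nonneg_right (by linarith) hrpow0

end Setup
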